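/- arXiv:2306.07133 — 3 statements merged into one kernel-verified Lean document; each statement's English description precedes it below -/
import Mathlib

section
/- Let α be an even natural number with α ≥ 2, let β satisfy 1/α + 1/β = 1, and let p : [0,1] → ℝ be measurable with ‖p − 1‖_{L^α([0,1])} ≤ K for some K ≥ 0. Define e(x) = (1-x)∫_0^x z·p(z)dz + x∫_x^1 (1-z)p(z)dz and e_∞(x) = x(1-x)/2. Then |e(x) − e_∞(x)| ≤ (β+1)^{-1/β}·x(1-x)·K·(x^{1/β} + (1-x)^{1/β}) ≤ x(1-x)·K for all x ∈ [0,1]. -/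
/-!
Writing `q = p - 1`, linearity and the explicit solution `x (1 - x) / 2` for `p ≡ 1` turn the
error into `(1 - x) ∫₀ˣ z q z dz + x ∫ₓ¹ (1 - z) q z dz`. Hölder's inequality bounds each integral
by `K` times the `L^β` norm of its weight, which is `(β + 1)^(-1/β) x^(1 + 1/β)` for the weight `z`
on `[0, x]` and the same with `1 - x` for `1 - z` on `[x, 1]`. For the second bound, `α ≥ 2` forces
`β ≤ 2`, so `x^(1/β) + (1 - x)^(1/β) ≤ √x + √(1 - x) ≤ √2 ≤ (β + 1)^(1/β)`.
-/

open Real intervalIntegral MeasureTheory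
open Set

/-- The solution of `-e'' = p`, `e 0 = e 1 = 0`: the integral of `p` against the Green's function
of `-d²/dx²` on `[0, 1]`. -/
noncomputable def greenIntegral (p : ℝ → ℝ) (x : ℝ) : ℝ :=
  (1 - x) * (∫ z in (0 : ℝ)..x, z * p z) + x * ∫ z in x..(1 : ℝ), (1 - z) * p z

lemma greenIntegral_one (x : ℝ) : greenIntegral (fun _ => 1) x = x * (1 - x) / 2 := by
  simp only [greenIntegral, mul_one, integral_id, integral_sub intervalIntegrable_const
    intervalIntegrable_id, intervalIntegral.integral_const, smul_eq_mul]
  ring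

lemma greenIntegral_sub {p r : ℝ → ℝ} (hp : IntervalIntegrable p volume 0 1)
    (hr : IntervalIntegrable r volume 0 1) {x : ℝ} (hx : x ∈ Icc (0 : ℝ) 1) :
    greenIntegral (fun z => p z - r z) x = greenIntegral p x - greenIntegral r x := by
  have hleft {f : ℝ → ℝ} (hf : IntervalIntegrable f volume 0 1) :
      IntervalIntegrable (fun z => z * f z) volume 0 x :=
    (hf.mono_set (uIcc_subset_uIcc_left (by rwa [uIcc_of_le zero_le_one]))).continuousOn_mul
      continuousOn_id
  have hright {f : ℝ → ℝ} (hf : IntervalIntegrable f volume 0 1) :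
      IntervalIntegrable (fun z => (1 - z) * f z) volume x 1 :=
    (hf.mono_set (uIcc_subset_uIcc_right (by rwa [uIcc_of_le zero_le_one]))).continuousOn_mul
      (continuousOn_const.sub continuousOn_id)
  simp only [greenIntegral, mul_sub, integral_sub (hleft hp) (hleft hr),
    integral_sub (hright hp) (hright hr)]
  ring

lemma abs_integral_mul_le_Lp_mul_Lq {X : Type*} [MeasurableSpace X] {μ : Measure X}
    {p q : ℝ} (hpq : p.HolderConjugate q) {f g : X → ℝ}
    (hf : MemLp f (ENNReal.ofReal p) μ) (hg : MemLp g (ENNReal.ofReal q) μ) :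
    |∫ a, f a * g a ∂μ| ≤ (∫ a, |f a| ^ p ∂μ) ^ (1 / p) * (∫ a, |g a| ^ q ∂μ) ^ (1 / q) := by
  have hholder := integral_mul_norm_le_Lp_mul_Lq hpq hf hg
  simp only [norm_eq_abs, ← abs_mul] at hholder
  exact abs_integral_le_integral_abs.trans hholder

lemma integral_rpow_abs_rpow_le_of_eLpNorm_le {X : Type*} [MeasurableSpace X]
    {μ : Measure X} {q K : ℝ} (hq : 0 < q) (hK : 0 ≤ K) {g : X → ℝ}
    (hg : AEStronglyMeasurable g μ) (hgK : eLpNorm g (ENNReal.ofReal q) μ ≤ ENNReal.ofReal K) :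
    (∫ a, |g a| ^ q ∂μ) ^ (1 / q) ≤ K := by
  have hmem : MemLp g (ENNReal.ofReal q) μ := ⟨hg, hgK.trans_lt ENNReal.ofReal_lt_top⟩
  rw [hmem.eLpNorm_eq_integral_rpow_norm (by simpa using hq) ENNReal.ofReal_ne_top,
    ENNReal.ofReal_le_ofReal_iff hK, ENNReal.toReal_ofReal hq.le] at hgK
  simpa only [norm_eq_abs, one_div] using hgK

lemma abs_intervalIntegral_mul_le_of_eLpNorm_le {a b p q K : ℝ} (hab : a ≤ b)
    (hpq : p.HolderConjugate q) (hK : 0 ≤ K) {f g : ℝ → ℝ}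
    (hf : MemLp f (ENNReal.ofReal p) (volume.restrict (Icc a b)))
    (hg : AEStronglyMeasurable g (volume.restrict (Icc a b)))
    (hgK : eLpNorm g (ENNReal.ofReal q) (volume.restrict (Icc a b)) ≤ ENNReal.ofReal K) :
    |∫ z in a..b, f z * g z| ≤ (∫ z in a..b, |f z| ^ p) ^ (1 / p) * K := by
  have hmem : MemLp g (ENNReal.ofReal q) (volume.restrict (Icc a b)) :=
    ⟨hg, hgK.trans_lt ENNReal.ofReal_lt_top⟩
  rw [integral_of_le hab, integral_of_le hab, ← integral_Icc_eq_integral_Ioc,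
    ← integral_Icc_eq_integral_Ioc]
  exact (abs_integral_mul_le_Lp_mul_Lq hpq hf hmem).trans <| mul_le_mul_of_nonneg_left
    (integral_rpow_abs_rpow_le_of_eLpNorm_le hpq.symm.pos hK hg hgK) (by positivity)

lemma integral_abs_rpow_rpow_one_div {β y : ℝ} (hβ : 0 < β) (hy : 0 ≤ y) :
    (∫ z in (0 : ℝ)..y, |z| ^ β) ^ (1 / β) = (β + 1) ^ (-(1 / β)) * (y * y ^ (1 / β)) := by
  have hint : ∫ z in (0 : ℝ)..y, |z| ^ β = y ^ (β + 1) / (β + 1) := by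
    rw [integral_congr (g := fun z => z ^ β) fun z hz => by
        rw [abs_of_nonneg (uIcc_of_le hy ▸ hz).1],
      integral_rpow (Or.inl (by linarith)), zero_rpow (by linarith), sub_zero]
  rw [hint, div_rpow (by positivity) (by positivity), ← rpow_mul hy,
    show (β + 1) * (1 / β) = 1 + 1 / β by field_simp, rpow_add_of_nonneg hy zero_le_one
    (by positivity), rpow_one, rpow_neg (by positivity), div_eq_inv_mul]

lemma abs_greenIntegral_le {β γ K x : ℝ} (hβγ : β.HolderConjugate γ) (hK : 0 ≤ K) {q : ℝ → ℝ}
    (hq : AEStronglyMeasurable q (volume.restrict (Icc 0 1)))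
    (hqK : eLpNorm q (ENNReal.ofReal γ) (volume.restrict (Icc 0 1)) ≤ ENNReal.ofReal K)
    (hx : x ∈ Icc (0 : ℝ) 1) :
    |greenIntegral q x|
      ≤ (β + 1) ^ (-(1 / β)) * (x * (1 - x)) * K * (x ^ (1 / β) + (1 - x) ^ (1 / β)) := by
  obtain ⟨hx0, hx1⟩ := hx
  have hpiece {a b : ℝ} {w : ℝ → ℝ} (hab : a ≤ b) (ha : 0 ≤ a) (hb : b ≤ 1)
      (hw : MemLp w (ENNReal.ofReal β) (volume.restrict (Icc a b))) :
      |∫ z in a..b, w z * q z| ≤ (∫ z in a..b, |w z| ^ β) ^ (1 / β) * K := by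
    have hsub : volume.restrict (Icc a b) ≤ volume.restrict (Icc 0 1) :=
      Measure.restrict_mono (Icc_subset_Icc ha hb) le_rfl
    exact abs_intervalIntegral_mul_le_of_eLpNorm_le hab hβγ hK hw (hq.mono_measure hsub)
      ((eLpNorm_mono_measure _ hsub).trans hqK)
  have hleft : |∫ z in (0 : ℝ)..x, z * q z|
      ≤ (β + 1) ^ (-(1 / β)) * (x * x ^ (1 / β)) * K := by
    have h := hpiece (w := fun z => z) hx0 le_rfl hx1
      ((monotone_id.monotoneOn _).memLp_isCompact isCompact_Icc)
    rwa [integral_abs_rpow_rpow_one_div hβγ.pos hx0] at h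
  have hright : |∫ z in x..(1 : ℝ), (1 - z) * q z|
      ≤ (β + 1) ^ (-(1 / β)) * ((1 - x) * (1 - x) ^ (1 / β)) * K := by
    have h := hpiece (w := fun z => 1 - z) hx1 hx0 le_rfl
      (AntitoneOn.memLp_isCompact isCompact_Icc fun _ _ _ _ h => sub_le_sub_left h 1)
    rwa [integral_comp_sub_left (fun z => |z| ^ β), sub_self,
      integral_abs_rpow_rpow_one_div hβγ.pos (by linarith)] at h
  calc |greenIntegral q x|
      ≤ (1 - x) * |∫ z in (0 : ℝ)..x, z * q z| + x * |∫ z in x..(1 : ℝ), (1 - z) * q z| := by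
        refine (abs_add_le _ _).trans_eq ?_
        rw [abs_mul, abs_mul, abs_of_nonneg (sub_nonneg.mpr hx1), abs_of_nonneg hx0]
    _ ≤ (1 - x) * ((β + 1) ^ (-(1 / β)) * (x * x ^ (1 / β)) * K)
        + x * ((β + 1) ^ (-(1 / β)) * ((1 - x) * (1 - x) ^ (1 / β)) * K) := by
        gcongr
    _ = (β + 1) ^ (-(1 / β)) * (x * (1 - x)) * K * (x ^ (1 / β) + (1 - x) ^ (1 / β)) := by
        ring

lemma rpow_le_sqrt_of_le_one {y t : ℝ} (hy0 : 0 ≤ y) (hy1 : y ≤ 1) (ht : 1 / 2 ≤ t) :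
    y ^ t ≤ √y := by
  rw [sqrt_eq_rpow]
  exact rpow_le_rpow_of_exponent_ge' hy0 hy1 (by norm_num) ht

lemma sqrt_add_sqrt_one_sub_le {x : ℝ} (hx0 : 0 ≤ x) (hx1 : x ≤ 1) :
    √x + √(1 - x) ≤ √2 := by
  have hx := sq_sqrt hx0
  have hx' := sq_sqrt (sub_nonneg.mpr hx1)
  refine (le_sqrt (by positivity) zero_le_two).mpr ?_
  nlinarith [sq_nonneg (√x - √(1 - x))]

lemma rpow_neg_one_div_mul_add_le_one {β x : ℝ} (hβ1 : 1 ≤ β) (hβ2 : β ≤ 2)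
    (hx0 : 0 ≤ x) (hx1 : x ≤ 1) :
    (β + 1) ^ (-(1 / β)) * (x ^ (1 / β) + (1 - x) ^ (1 / β)) ≤ 1 := by
  have ht : 1 / 2 ≤ 1 / β := one_div_le_one_div_of_le (by linarith) hβ2
  have hsum : x ^ (1 / β) + (1 - x) ^ (1 / β) ≤ √2 :=
    (add_le_add (rpow_le_sqrt_of_le_one hx0 hx1 ht)
      (rpow_le_sqrt_of_le_one (sub_nonneg.mpr hx1) (by linarith) ht)).trans
      (sqrt_add_sqrt_one_sub_le hx0 hx1)
  have hbase : √2 ≤ (β + 1) ^ (1 / β) :=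
    calc √2 = 2 ^ (1 / 2 : ℝ) := sqrt_eq_rpow 2
      _ ≤ 2 ^ (1 / β) := rpow_le_rpow_of_exponent_le one_le_two ht
      _ ≤ (β + 1) ^ (1 / β) := rpow_le_rpow zero_le_two (by linarith) (by positivity)
  rw [rpow_neg (by linarith), ← div_eq_inv_mul, div_le_one (by positivity)]
  exact hsum.trans hbase

theorem decay_estimate_general (α : ℕ) (hα2 : 2 ≤ α) (β K : ℝ)
    (hβ : 1 / (α : ℝ) + 1 / β = 1) (hK : 0 ≤ K)
    (p : ℝ → ℝ) (hp : Measurable p)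
    (hnorm : eLpNorm (fun z => p z - 1) α (volume.restrict (Set.Icc (0 : ℝ) 1))
      ≤ ENNReal.ofReal K) :
    ∀ x ∈ Set.Icc (0 : ℝ) 1,
      |((1 - x) * (∫ z in (0 : ℝ)..x, z * p z) + x * (∫ z in x..(1 : ℝ), (1 - z) * p z))
          - x * (1 - x) / 2|
        ≤ (β + 1) ^ (-(1 / β)) * (x * (1 - x)) * K * (x ^ (1 / β) + (1 - x) ^ (1 / β)) ∧
      (β + 1) ^ (-(1 / β)) * (x * (1 - x)) * K * (x ^ (1 / β) + (1 - x) ^ (1 / β))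
        ≤ x * (1 - x) * K := by
  intro x hx
  have hα : (2 : ℝ) ≤ α := by exact_mod_cast hα2
  have hβ2 : 1 / 2 ≤ 1 / β := by linarith [one_div_le_one_div_of_le two_pos hα]
  have hβγ : β.HolderConjugate α := by
    simpa using holderConjugate_one_div (by linarith) (by positivity) ((add_comm _ _).trans hβ)
  have hq : MemLp (fun z => p z - 1) α (volume.restrict (Icc 0 1)) :=
    ⟨(hp.sub measurable_const).aestronglyMeasurable, hnorm.trans_lt ENNReal.ofReal_lt_top⟩
  have hpint : IntervalIntegrable p volume 0 1 := by
    refine (intervalIntegrable_iff_integrableOn_Icc_of_le zero_le_one).mpr ?_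
    exact ((hq.integrable (by exact_mod_cast hα2.trans' one_le_two)).add (integrable_const 1)).congr
      (ae_of_all _ fun z => sub_add_cancel (p z) 1)
  have hbound := abs_greenIntegral_le hβγ hK hq.1 (by rwa [ENNReal.ofReal_natCast]) hx
  rw [greenIntegral_sub hpint intervalIntegrable_const hx, greenIntegral_one] at hbound
  refine ⟨hbound, ?_⟩
  calc _ = ((β + 1) ^ (-(1 / β)) * (x ^ (1 / β) + (1 - x) ^ (1 / β))) * (x * (1 - x) * K) := by
        ring
    _ ≤ 1 * (x * (1 - x) * K) := by
        gcongr
        · exact mul_nonneg (mul_nonneg hx.1 (sub_nonneg.mpr hx.2)) hK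
        · exact rpow_neg_one_div_mul_add_le_one hβγ.lt.le
            ((one_div_le_one_div two_pos hβγ.pos).mp hβ2) hx.1 hx.2
    _ = x * (1 - x) * K := one_mul _

/-- Decay estimate: if `‖p − 1‖_{L^α([0,1])} ≤ K` with `α` even, `1/α + 1/β = 1`, then
`|e(x) − e_∞(x)| ≤ (β+1)^{-1/β}·x(1-x)·K·(x^{1/β} + (1-x)^{1/β}) ≤ x(1-x)·K`. -/
theorem decay_estimate (α : ℕ) (hα : Even α) (hα2 : 2 ≤ α) (β K : ℝ)
    (hβ : 1 / (α : ℝ) + 1 / β = 1) (hK : 0 ≤ K)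
    (p : ℝ → ℝ) (hp : Measurable p)
    (hnorm : eLpNorm (fun z => p z - 1) α (volume.restrict (Set.Icc (0 : ℝ) 1))
      ≤ ENNReal.ofReal K) :
    ∀ x ∈ Set.Icc (0 : ℝ) 1,
      |((1 - x) * (∫ z in (0 : ℝ)..x, z * p z) + x * (∫ z in x..(1 : ℝ), (1 - z) * p z))
          - x * (1 - x) / 2|
        ≤ (β + 1) ^ (-(1 / β)) * (x * (1 - x)) * K * (x ^ (1 / β) + (1 - x) ^ (1 / β)) ∧
      (β + 1) ^ (-(1 / β)) * (x * (1 - x)) * K * (x ^ (1 / β) + (1 - x) ^ (1 / β))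
        ≤ x * (1 - x) * K :=
  decay_estimate_general α hα2 β K hβ hK p hp hnorm
end

section
/- The function e*(t,x) = (T−t)·( log( sin(πx)/(π√(T−t)) ) + 1/2 ), defined for t ∈ [0,T) and x ∈ (0,1), satisfies ∂_{xx} e*(t,x) = −(T−t)·π²/sin²(πx) and the PDE 2∂_t e*(t,x) = log( (T−t)π²/sin²(πx) ) = log(−∂_{xx}e*(t,x)); moreover e*(T⁻, x) := lim_{t→T} e*(t,x) = 0 for each fixed x ∈ (0,1). -/
open Real

private lemma bb_sin_pos {y : ℝ} (hy : y ∈ Set.Ioo (0:ℝ) 1) : 0 < Real.sin (π * y) :=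
  Real.sin_pos_of_pos_of_lt_pi (mul_pos Real.pi_pos hy.1)
    (by nlinarith [Real.pi_pos, hy.2, hy.1])

private lemma bb_hasDerivAt_sin (y : ℝ) :
    HasDerivAt (fun z => Real.sin (π * z)) (Real.cos (π * y) * π) y := by
  have h1 : HasDerivAt (fun z : ℝ => π * z) π y := by
    simpa using (hasDerivAt_id y).const_mul π
  exact (Real.hasDerivAt_sin (π * y)).comp y h1

/-- The Backhoff–Beiglböck entropy
`e*(t,x) = (T−t)(log(sin(πx)/(π√(T−t))) + 1/2)` satisfies, on `[0,T) × (0,1)`,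
`∂_{xx} e* = −(T−t)π²/sin²(πx)`, `2∂_t e* = log((T−t)π²/sin²(πx)) = log(−∂_{xx} e*)`,
and `e*(t,x) → 0` as `t ↑ T` for each fixed `x ∈ (0,1)`. -/
theorem backhoff_entropy_solves_pde (T : ℝ) (hT : 0 < T) :
    let estar : ℝ → ℝ → ℝ := fun t x =>
      (T - t) * (Real.log (Real.sin (π * x) / (π * Real.sqrt (T - t))) + 1 / 2)
    (∀ t ∈ Set.Ico (0 : ℝ) T, ∀ x ∈ Set.Ioo (0 : ℝ) 1,
      deriv (deriv (fun y => estar t y)) x = -((T - t) * π ^ 2 / (Real.sin (π * x)) ^ 2) ∧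
      2 * deriv (fun s => estar s x) t
        = Real.log ((T - t) * π ^ 2 / (Real.sin (π * x)) ^ 2) ∧
      2 * deriv (fun s => estar s x) t
        = Real.log (-(deriv (deriv (fun y => estar t y)) x))) ∧
    (∀ x ∈ Set.Ioo (0 : ℝ) 1,
      Filter.Tendsto (fun t => estar t x) (nhdsWithin T (Set.Iio T)) (nhds 0)) := by
  intro estar
  have hpi := Real.pi_pos
  constructor
  · rintro t ⟨ht0, htT⟩ x hx
    have hTt : 0 < T - t := sub_pos.2 htT
    have hsx : 0 < Real.sin (π * x) := bb_sin_pos hx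
    have hc : 0 < π * Real.sqrt (T - t) := by positivity
    -- first x-derivative on Ioo 0 1
    have hd1 : ∀ y ∈ Set.Ioo (0:ℝ) 1,
        HasDerivAt (fun z => estar t z)
          ((T - t) * π * Real.cos (π * y) / Real.sin (π * y)) y := by
      intro y hy
      have hsy : 0 < Real.sin (π * y) := bb_sin_pos hy
      have h2 : HasDerivAt (fun z => Real.sin (π * z) / (π * Real.sqrt (T - t)))
          (Real.cos (π * y) * π / (π * Real.sqrt (T - t))) y :=
        (bb_hasDerivAt_sin y).div_const _
      have h3 := (h2.log (by positivity)).add_const (1/2 : ℝ)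
      have h4 := h3.const_mul (T - t)
      refine h4.congr_deriv ?_
      field_simp
    -- second x-derivative
    have hxx : deriv (deriv (fun y => estar t y)) x
        = -((T - t) * π ^ 2 / (Real.sin (π * x)) ^ 2) := by
      have hev : deriv (fun y => estar t y)
          =ᶠ[nhds x] fun y => (T - t) * π * Real.cos (π * y) / Real.sin (π * y) := by
        filter_upwards [isOpen_Ioo.mem_nhds hx] with y hy
        exact (hd1 y hy).deriv
      rw [hev.deriv_eq]
      have hu : HasDerivAt (fun y => (T - t) * π * Real.cos (π * y))
          ((T - t) * π * (-Real.sin (π * x) * π)) x := by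
        have h1 : HasDerivAt (fun z : ℝ => π * z) π x := by
          simpa using (hasDerivAt_id x).const_mul π
        exact (((Real.hasDerivAt_cos (π * x)).comp x h1).const_mul _)
      have hq := hu.div (bb_hasDerivAt_sin x) (ne_of_gt hsx)
      rw [show deriv (fun y => (T - t) * π * Real.cos (π * y) / Real.sin (π * y)) x = _ from hq.deriv]
      have hsc : Real.sin (π * x) ^ 2 + Real.cos (π * x) ^ 2 = 1 :=
        Real.sin_sq_add_cos_sq _
      field_simp
      linear_combination (-1 : ℝ) * hsc
    have h2t : 2 * deriv (fun s => estar s x) t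
        = Real.log ((T - t) * π ^ 2 / (Real.sin (π * x)) ^ 2) := by
      have hev : (fun s => estar s x) =ᶠ[nhds t]
          fun s => (T - s) * (Real.log (Real.sin (π * x)) - Real.log π
            - (1/2) * Real.log (T - s) + 1/2) := by
        filter_upwards [isOpen_Iio.mem_nhds (show t ∈ Set.Iio T from htT)] with s hs
        have hTs : 0 < T - s := sub_pos.2 hs
        simp only [estar]
        rw [Real.log_div (ne_of_gt hsx) (by positivity),
          Real.log_mul (ne_of_gt hpi) (by positivity),
          Real.log_sqrt hTs.le]
        ring
      have hlog : HasDerivAt (fun s => Real.log (T - s)) ((T - t)⁻¹ * (-1)) t := by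
        have h1 : HasDerivAt (fun s : ℝ => T - s) (-1) t := by
          simpa using (hasDerivAt_id t).const_sub T
        exact (Real.hasDerivAt_log (ne_of_gt hTt)).comp t h1
      have hin : HasDerivAt (fun s => Real.log (Real.sin (π * x)) - Real.log π
            - (1/2) * Real.log (T - s) + 1/2)
          (-((1/2) * ((T - t)⁻¹ * (-1)))) t := by
        have := ((hlog.const_mul (1/2 : ℝ)).const_sub
          (Real.log (Real.sin (π * x)) - Real.log π)).add_const (1/2 : ℝ)
        simpa using this
      have hTs' : HasDerivAt (fun s : ℝ => T - s) (-1) t := by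
        simpa using (hasDerivAt_id t).const_sub T
      have hg := hTs'.mul hin
      have hderiv : deriv (fun s => estar s x) t
          = (-1) * (Real.log (Real.sin (π * x)) - Real.log π
            - (1/2) * Real.log (T - t) + 1/2)
            + (T - t) * -((1/2) * ((T - t)⁻¹ * (-1))) := by
        rw [hev.deriv_eq]; exact hg.deriv
      rw [hderiv]
      rw [Real.log_div (by positivity) (by positivity),
        Real.log_mul (ne_of_gt hTt) (by positivity), Real.log_pow, Real.log_pow]
      field_simp
      ring
    exact ⟨hxx, h2t, by rw [hxx, neg_neg]; exact h2t⟩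
  · intro x hx
    have hsx : 0 < Real.sin (π * x) := bb_sin_pos hx
    have hev : (fun t => estar t x) =ᶠ[nhdsWithin T (Set.Iio T)]
        fun t => (T - t) * (Real.log (Real.sin (π * x)) - Real.log π + 1/2)
          - (1/2) * ((T - t) * Real.log (T - t)) := by
      filter_upwards [self_mem_nhdsWithin] with t ht
      have hTt : 0 < T - t := sub_pos.2 ht
      simp only [estar]
      rw [Real.log_div (ne_of_gt hsx) (by positivity),
        Real.log_mul (ne_of_gt pi_pos) (by positivity),
        Real.log_sqrt hTt.le]
      ring
    rw [Filter.tendsto_congr' hev]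
    have h1 : Filter.Tendsto (fun t : ℝ => T - t) (nhdsWithin T (Set.Iio T)) (nhds 0) := by
      have h : Filter.Tendsto (fun t : ℝ => T - t) (nhds T) (nhds (T - T)) :=
        (continuous_const.sub continuous_id).tendsto T
      simpa using h.mono_left nhdsWithin_le_nhds
    have h2 : Filter.Tendsto (fun t : ℝ => (T - t) * Real.log (T - t))
        (nhdsWithin T (Set.Iio T)) (nhds 0) := by
      have hc := Real.continuous_mul_log.tendsto 0
      simp only [Real.log_zero, mul_zero, zero_mul] at hc
      exact hc.comp h1
    have h3 := ((h1.mul_const (Real.log (Real.sin (π * x)) - Real.log π + 1/2)).sub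
      (h2.const_mul (1/2 : ℝ)))
    simpa using h3
end

section
/- For the explicit finite-difference scheme v_n^{m-1} = sup_{a ∈ [1/e, d]} { π(a)·v_{n+1}^m + (1 − 2π(a))·v_n^m + π(a)·v_{n-1}^m + (k/2)(log a + 1) }, with π(a) = k·a/(2h²), boundary values v_0^m = v_N^m = 0 and terminal values v_n^M = 0: if k·d/h² ≤ 1, then the scheme is monotone (π(a) ≥ 0 and 1 − 2π(a) ≥ 0 for all a ∈ [1/e, d]) and 0 ≤ v_n^m ≤ x_n(1 − x_n)/2 for all n ∈ {0,…,N}, m ∈ {0,…,M}, where x_n = n·h. -/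
/-!
The weights `π(a)` and `1 - 2π(a)` are nonnegative under the CFL condition `k d ≤ h²`, so each
time step maps nonnegative data to nonnegative data (take `a = 1/e`, where `log a + 1 = 0`) and
preserves any pointwise upper bound by a discrete super-solution. The barrier `x (1 - x) / 2`
is one: its discrete Laplacian is `-1`, so the three-point average loses exactly `π(a) h² = k a / 2`,
which pays for the source term since `log a + 1 ≤ a`. Backward induction in time concludes.
-/

open Real Set

noncomputable section

def schemeWeight (k h a : ℝ) : ℝ := k * a / (2 * h ^ 2)

def schemeValue (k h a l c r : ℝ) : ℝ :=
  schemeWeight k h a * r + (1 - 2 * schemeWeight k h a) * c + schemeWeight k h a * l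
    + k / 2 * (log a + 1)

def schemeUpdate (k h d : ℝ) (w : ℕ → ℝ) (n : ℕ) : ℝ :=
  sSup {z : ℝ | ∃ a : ℝ, exp (-1) ≤ a ∧ a ≤ d ∧
    z = schemeValue k h a (w (n - 1)) (w n) (w (n + 1))}

def barrier (x : ℝ) : ℝ := x * (1 - x) / 2

end

lemma sSup_mem_Icc_of_forall_le {lo hi L U : ℝ} {f : ℝ → ℝ} (hlohi : lo ≤ hi) (hL : L ≤ f lo)
    (hU : ∀ a, lo ≤ a → a ≤ hi → f a ≤ U) :
    sSup {z : ℝ | ∃ a, lo ≤ a ∧ a ≤ hi ∧ z = f a} ∈ Icc L U := by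
  have hmem : f lo ∈ {z : ℝ | ∃ a, lo ≤ a ∧ a ≤ hi ∧ z = f a} := ⟨lo, le_rfl, hlohi, rfl⟩
  have hbound : ∀ z ∈ {z : ℝ | ∃ a, lo ≤ a ∧ a ≤ hi ∧ z = f a}, z ≤ U := by
    rintro _ ⟨a, hlo, hhi, rfl⟩
    exact hU a hlo hhi
  exact ⟨hL.trans (le_csSup ⟨U, hbound⟩ hmem), csSup_le ⟨_, hmem⟩ hbound⟩

section Weights

variable {k h a : ℝ}

lemma schemeWeight_nonneg (hk : 0 ≤ k) (ha : 0 ≤ a) : 0 ≤ schemeWeight k h a := by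
  unfold schemeWeight
  positivity

lemma one_sub_two_mul_schemeWeight_nonneg (hka : k * a ≤ h ^ 2) :
    0 ≤ 1 - 2 * schemeWeight k h a := by
  have hdiv : 2 * schemeWeight k h a = k * a / h ^ 2 := by
    unfold schemeWeight
    field_simp
  rw [hdiv, sub_nonneg]
  exact div_le_one_of_le₀ hka (sq_nonneg h)

lemma schemeWeight_mul_sq (hh : h ≠ 0) : schemeWeight k h a * h ^ 2 = k * a / 2 := by
  unfold schemeWeight
  field_simp

end Weights

lemma barrier_nonneg {x : ℝ} (h0 : 0 ≤ x) (h1 : x ≤ 1) : 0 ≤ barrier x := by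
  have : 0 ≤ 1 - x := by linarith
  unfold barrier
  positivity

lemma barrier_grid_nonneg {N n : ℕ} {h : ℝ} (hh : 0 ≤ h) (hNh : (N : ℝ) * h = 1) (hn : n ≤ N) :
    0 ≤ barrier (n * h) := by
  refine barrier_nonneg (by positivity) ?_
  rw [← hNh]
  exact mul_le_mul_of_nonneg_right (Nat.cast_le.2 hn) hh

lemma barrier_three_point (p x h : ℝ) :
    p * barrier (x + h) + (1 - 2 * p) * barrier x + p * barrier (x - h) =
      barrier x - p * h ^ 2 := by
  unfold barrier
  ring

section OneStep

variable {k h d : ℝ}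

lemma schemeValue_exp_neg_one_nonneg (hk : 0 ≤ k) (hkd : k * exp (-1) ≤ h ^ 2) {l c r : ℝ}
    (hl : 0 ≤ l) (hc : 0 ≤ c) (hr : 0 ≤ r) : 0 ≤ schemeValue k h (exp (-1)) l c r := by
  have hp := schemeWeight_nonneg (h := h) hk (exp_pos (-1)).le
  have hq := one_sub_two_mul_schemeWeight_nonneg hkd
  simp only [schemeValue, log_exp, neg_add_cancel, mul_zero, add_zero]
  positivity

lemma schemeValue_le_barrier (hk : 0 ≤ k) (hh : h ≠ 0) {a : ℝ} (ha : 0 < a)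
    (hka : k * a ≤ h ^ 2) {x l c r : ℝ} (hl : l ≤ barrier (x - h)) (hc : c ≤ barrier x)
    (hr : r ≤ barrier (x + h)) : schemeValue k h a l c r ≤ barrier x := by
  have hp := schemeWeight_nonneg (h := h) hk ha.le
  have hq := one_sub_two_mul_schemeWeight_nonneg hka
  have hsource : k / 2 * (log a + 1) ≤ k / 2 * a := by
    gcongr
    linarith [log_le_sub_one_of_pos ha]
  calc schemeValue k h a l c r
      ≤ schemeWeight k h a * barrier (x + h) + (1 - 2 * schemeWeight k h a) * barrier x
          + schemeWeight k h a * barrier (x - h) + k / 2 * a := by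
        unfold schemeValue
        gcongr
    _ = barrier x := by
        rw [barrier_three_point, schemeWeight_mul_sq hh]
        ring

lemma schemeUpdate_mem_Icc (hk : 0 ≤ k) (hh : h ≠ 0) (hd : exp (-1) ≤ d) (hkd : k * d ≤ h ^ 2)
    {w : ℕ → ℝ} {n : ℕ} (hn : 1 ≤ n)
    (hw : ∀ j, n - 1 ≤ j → j ≤ n + 1 → w j ∈ Icc 0 (barrier (j * h))) :
    schemeUpdate k h d w n ∈ Icc 0 (barrier (n * h)) := by
  obtain ⟨hl0, hl⟩ := hw (n - 1) le_rfl (by omega)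
  obtain ⟨hc0, hc⟩ := hw n (by omega) (by omega)
  obtain ⟨hr0, hr⟩ := hw (n + 1) (by omega) le_rfl
  rw [Nat.cast_sub hn, Nat.cast_one, sub_one_mul] at hl
  rw [Nat.cast_succ, add_one_mul] at hr
  have hka : ∀ a ≤ d, k * a ≤ h ^ 2 := fun a had => (mul_le_mul_of_nonneg_left had hk).trans hkd
  refine sSup_mem_Icc_of_forall_le hd
    (schemeValue_exp_neg_one_nonneg hk (hka _ hd) hl0 hc0 hr0) fun a ha had => ?_
  exact schemeValue_le_barrier hk hh ((exp_pos _).trans_le ha) (hka a had) hl hc hr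

end OneStep

lemma schemeUpdate_row_mem_Icc {k h d : ℝ} (hk : 0 ≤ k) (hh : h ≠ 0) (hd : exp (-1) ≤ d)
    (hkd : k * d ≤ h ^ 2) {N : ℕ} (hNh : (N : ℝ) * h = 1) {u w : ℕ → ℝ} (hu0 : u 0 = 0)
    (huN : u N = 0) (hu : ∀ n, 1 ≤ n → n ≤ N - 1 → u n = schemeUpdate k h d w n)
    (hw : ∀ n ≤ N, w n ∈ Icc 0 (barrier (n * h))) :
    ∀ n ≤ N, u n ∈ Icc 0 (barrier (n * h)) := by
  intro n hn
  rcases Nat.eq_zero_or_pos n with rfl | hn0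
  · simp [hu0, barrier]
  rcases hn.eq_or_lt with rfl | hnN
  · simp [huN, hNh, barrier]
  rw [hu n hn0 (by omega)]
  exact schemeUpdate_mem_Icc hk hh hd hkd hn0 fun j _ hj => hw j (by omega)

theorem explicit_scheme_bounds_general (N M : ℕ) (hN : 0 < N)
    (T d : ℝ) (hT : 0 < T) (hd : Real.exp (-1) ≤ d)
    (h k : ℝ) (hh : h = 1 / N) (hk : k = T / M)
    (hCFL : k * d / h ^ 2 ≤ 1)
    (v : ℕ → ℕ → ℝ)
    (hbc0 : ∀ m, m ≤ M → v 0 m = 0) (hbcN : ∀ m, m ≤ M → v N m = 0)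
    (htc : ∀ n, n ≤ N → v n M = 0)
    (hscheme : ∀ m, 1 ≤ m → m ≤ M → ∀ n, 1 ≤ n → n ≤ N - 1 →
      v n (m - 1) = sSup {z : ℝ | ∃ a : ℝ, Real.exp (-1) ≤ a ∧ a ≤ d ∧
        z = (k * a / (2 * h ^ 2)) * v (n + 1) m
          + (1 - 2 * (k * a / (2 * h ^ 2))) * v n m
          + (k * a / (2 * h ^ 2)) * v (n - 1) m
          + (k / 2) * (Real.log a + 1)}) :
    (∀ a : ℝ, Real.exp (-1) ≤ a → a ≤ d →
      0 ≤ k * a / (2 * h ^ 2) ∧ 0 ≤ 1 - 2 * (k * a / (2 * h ^ 2))) ∧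
    (∀ n, n ≤ N → ∀ m, m ≤ M →
      0 ≤ v n m ∧ v n m ≤ ((n : ℝ) * h) * (1 - (n : ℝ) * h) / 2) := by
  have hh0 : 0 < h := by rw [hh]; positivity
  have hk0 : 0 ≤ k := by rw [hk]; positivity
  have hNh : (N : ℝ) * h = 1 := by rw [hh]; field_simp
  have hkd : k * d ≤ h ^ 2 := (div_le_one (by positivity)).mp hCFL
  refine ⟨fun a ha had => ⟨schemeWeight_nonneg hk0 ((exp_pos _).le.trans ha),
    one_sub_two_mul_schemeWeight_nonneg ((mul_le_mul_of_nonneg_left had hk0).trans hkd)⟩, fun n hn m hm => ?_⟩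
  induction hm using Nat.decreasingInduction generalizing n with
  | self => exact ⟨(htc n hn).ge, (htc n hn).trans_le (barrier_grid_nonneg hh0.le hNh hn)⟩
  | of_succ m hmM ih =>
    exact schemeUpdate_row_mem_Icc hk0 hh0.ne' hd hkd hNh (hbc0 m hmM.le) (hbcN m hmM.le)
      (fun n h1 h2 => hscheme (m + 1) (by omega) hmM n h1 h2) ih n hn

/-- Monotonicity and bounds for the explicit finite-difference scheme: with
`h = 1/N`, `k = T/M`, `π(a) = k·a/(2h²)`, boundary/terminal values zero and the scheme
`v_n^{m-1} = sup_{a ∈ [1/e,d]} {π(a)v_{n+1}^m + (1−2π(a))v_n^m + π(a)v_{n-1}^m + (k/2)(log a + 1)}`,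
if `k·d/h² ≤ 1` then `π(a) ≥ 0`, `1 − 2π(a) ≥ 0` on `[1/e,d]`, and
`0 ≤ v_n^m ≤ x_n(1−x_n)/2` with `x_n = n·h`. -/
theorem explicit_scheme_bounds (N M : ℕ) (hN : 0 < N) (hM : 0 < M)
    (T d : ℝ) (hT : 0 < T) (hd : Real.exp (-1) ≤ d)
    (h k : ℝ) (hh : h = 1 / N) (hk : k = T / M)
    (hCFL : k * d / h ^ 2 ≤ 1)
    (v : ℕ → ℕ → ℝ)
    (hbc0 : ∀ m, m ≤ M → v 0 m = 0) (hbcN : ∀ m, m ≤ M → v N m = 0)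
    (htc : ∀ n, n ≤ N → v n M = 0)
    (hscheme : ∀ m, 1 ≤ m → m ≤ M → ∀ n, 1 ≤ n → n ≤ N - 1 →
      v n (m - 1) = sSup {z : ℝ | ∃ a : ℝ, Real.exp (-1) ≤ a ∧ a ≤ d ∧
        z = (k * a / (2 * h ^ 2)) * v (n + 1) m
          + (1 - 2 * (k * a / (2 * h ^ 2))) * v n m
          + (k * a / (2 * h ^ 2)) * v (n - 1) m
          + (k / 2) * (Real.log a + 1)}) :
    (∀ a : ℝ, Real.exp (-1) ≤ a → a ≤ d →
      0 ≤ k * a / (2 * h ^ 2) ∧ 0 ≤ 1 - 2 * (k * a / (2 * h ^ 2))) ∧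
    (∀ n, n ≤ N → ∀ m, m ≤ M →
      0 ≤ v n m ∧ v n m ≤ ((n : ℝ) * h) * (1 - (n : ℝ) * h) / 2) :=
  explicit_scheme_bounds_general N M hN T d hT hd h k hh hk hCFL v hbc0 hbcN htc hscheme
end
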